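/- If P and P' are paths in T such that P is a subpath of P' (P ⊆ P'), then Q̄(P) ≤ Q̄(P'), where Q̄ takes values in [0,∞]. -/

import Mathlib

open scoped ENNReal

noncomputable section

/-- A finite tree with positive edge lengths, nonnegative vertex weights,
and a positive cruising speed. -/
structure WeightedTree (V : Type*) [Fintype V] where
  G : SimpleGraph V
  isTree : G.IsTree
  len : Sym2 V → ℝ
  len_pos : ∀ e ∈ G.edgeSet, 0 < len e
  w : V → ℝ
  w_nonneg : ∀ v, 0 ≤ w v
  vt : ℝ
  vt_pos : 0 < vt

namespace WeightedTree

variable {V : Type*} [Fintype V] [DecidableEq V] (T : WeightedTree V)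

/-- `d x y`: the length of the unique path between `x` and `y`. -/
def d (x y : V) : ℝ :=
  (((T.isTree.existsUnique_path x y).choose).edges.map T.len).sum

/-- The closest vertex of the list `l` (the vertex sequence of a path) to `v`. -/
def closest (l : List V) (v : V) : V :=
  if h : ∃ u ∈ l, ∀ u' ∈ l, T.d u v ≤ T.d u' v then h.choose else v

/-- `d(P,v)`: the distance from the path with vertex sequence `l` to `v`. -/
def dP (l : List V) (v : V) : ℝ := T.d (T.closest l v) v

/-- The weight of the branch of the vertex `q` with respect to the path with
vertex sequence `l`: the total weight of all vertices whose closest vertex on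
the path is `q`. -/
def wBranch (l : List V) (q : V) : ℝ :=
  ∑ v ∈ Finset.univ.filter (fun v => T.closest l v = q), T.w v

/-- `w(T)`: total weight of the tree. -/
def wT : ℝ := ∑ v, T.w v

/-- `d̄_P(û,p) = ∑_j w_{T_{p(j)}} d(p(j), p)` for the path with vertex sequence `l`. -/
def dbar (l : List V) (p : V) : ℝ := (l.map (fun q => T.wBranch l q * T.d q p)).sum

/-- `s_p(P) = (1/vt) d̄_P(û,p)` for a vertex `p` of the path. -/
def sOn (l : List V) (p : V) : ℝ := (1 / T.vt) * T.dbar l p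

/-- `s_i(P) = (1/vt) d̄_P(û,p(i))`, where `p(i)` is the closest vertex of the path to `v_i`. -/
def s (l : List V) (v : V) : ℝ := T.sOn l (T.closest l v)

/-- Mean service time `S̄(P)`. -/
def Sbar (l : List V) : ℝ := ∑ v, T.w v * T.s l v

/-- Second moment `S̄²(P)` of the service time. -/
def S2bar (l : List V) : ℝ := ∑ v, T.w v * (T.s l v) ^ 2

/-- `T̄1(P) = (1/vt) ∑ w_i d(P, v_i)`. -/
def T1 (l : List V) : ℝ := (1 / T.vt) * ∑ v, T.w v * T.dP l v

/-- `T̄2(P) = (1/vt) ∑ w_i d̄_P(û, p(i))`. -/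
def T2 (l : List V) : ℝ := (1 / T.vt) * ∑ v, T.w v * T.dbar l (T.closest l v)

/-- The M/G/1 queueing delay `Q̄(P)`, valued in `[0,∞]`. -/
def Qbar (lam : ℝ) (l : List V) : ℝ≥0∞ :=
  if 0 < 1 - lam * T.Sbar l then
    ENNReal.ofReal (lam * T.S2bar l / (2 * (1 - lam * T.Sbar l)))
  else ⊤

/-- The M/G/1 queueing delay `Q̄(P)` as an extended real. -/
def QbarE (lam : ℝ) (l : List V) : EReal :=
  if 0 < 1 - lam * T.Sbar l then
    ((lam * T.S2bar l / (2 * (1 - lam * T.Sbar l)) : ℝ) : EReal)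
  else ⊤

/-- `|P|`: the total length of the path `P`. -/
def plen {a b : V} (P : T.G.Walk a b) : ℝ := (P.edges.map T.len).sum

/-- The objective `F(P) = α1·|P| + α2·(β·(Q̄(P)+T̄2(P)) + (1-β)·T̄1(P))`. -/
def F (α1 α2 β lam : ℝ) {a b : V} (P : T.G.Walk a b) : EReal :=
  ((α1 * T.plen P : ℝ) : EReal) +
    (α2 : EReal) *
      ((β : EReal) * (T.QbarE lam P.support + ((T.T2 P.support : ℝ) : EReal)) +
        (((1 - β) * T.T1 P.support : ℝ) : EReal))

end WeightedTree

/-! In a tree, the vertex `c` of a path closest to `v` is a gate: every vertex `u` of the path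
satisfies `d(u,v) = d(u,c) + d(c,v)`. Consequently the projection onto a path is 1-Lipschitz,
and projecting onto a subpath `P ⊆ P'` factors through projecting onto `P'`, so distances between
projections can only grow from `P` to `P'`. Regrouping the branches, `s_i(P)` is
`(1/vt) ∑_j w_j d(p(j), p(i))`, so every service time grows, hence so do `S̄` and `S̄²`, and the
M/G/1 formula is monotone in both. -/

namespace SimpleGraph.Walk

variable {V : Type*} {G : SimpleGraph V}

theorem IsPath.append_of_support_inter {u v w : V} {p : G.Walk u v} {q : G.Walk v w}
    (hp : p.IsPath) (hq : q.IsPath) (hpq : ∀ x ∈ p.support, x ∈ q.support → x = v) :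
    (p.append q).IsPath := by
  have hq' := hq.support_nodup
  rw [← q.cons_tail_support, List.nodup_cons] at hq'
  rw [isPath_def, support_append, List.nodup_append]
  refine ⟨hp.support_nodup, hq'.2, ?_⟩
  rintro x hxp _ hxq rfl
  exact hq'.1 (hpq x hxp (List.tail_subset _ hxq) ▸ hxq)

theorem exists_isPath_support_subset [DecidableEq V] {a b u c : V} (p : G.Walk a b)
    (hu : u ∈ p.support) (hc : c ∈ p.support) :
    ∃ q : G.Walk u c, q.IsPath ∧ q.support ⊆ p.support := by
  refine ⟨((p.takeUntil u hu).reverse.append (p.takeUntil c hc)).bypass, bypass_isPath _, ?_⟩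
  intro x hx
  replace hx := support_bypass_subset_support _ hx
  rw [support_append, support_reverse] at hx
  rcases List.mem_append.1 hx with hx | hx
  · exact p.support_takeUntil_subset_support hu (List.mem_reverse.1 hx)
  · exact p.support_takeUntil_subset_support hc (List.tail_subset _ hx)

end SimpleGraph.Walk

namespace WeightedTree

open SimpleGraph

variable {V : Type*} [Fintype V] (T : WeightedTree V) {x y z a b a' b' : V}

theorem plen_nonneg (p : T.G.Walk x y) : 0 ≤ T.plen p :=
  List.sum_nonneg fun _ hl => by
    obtain ⟨e, he, rfl⟩ := List.mem_map.1 hl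
    exact (T.len_pos e (p.edges_subset_edgeSet he)).le

theorem plen_append (p : T.G.Walk x y) (q : T.G.Walk y z) :
    T.plen (p.append q) = T.plen p + T.plen q := by
  simp only [plen, Walk.edges_append, List.map_append, List.sum_append]

theorem d_eq_plen {p : T.G.Walk x y} (hp : p.IsPath) : T.d x y = T.plen p := by
  rw [d, ← (T.isTree.existsUnique_path x y).choose_spec.2 p hp, plen]

theorem exists_isPath_d_eq_plen (x y : V) : ∃ p : T.G.Walk x y, p.IsPath ∧ T.d x y = T.plen p :=
  let ⟨p, hp, _⟩ := T.isTree.existsUnique_path x y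
  ⟨p, hp, T.d_eq_plen hp⟩

theorem d_nonneg (x y : V) : 0 ≤ T.d x y :=
  let ⟨p, _, hd⟩ := T.exists_isPath_d_eq_plen x y
  hd ▸ T.plen_nonneg p

theorem d_symm (x y : V) : T.d x y = T.d y x := by
  obtain ⟨p, hp, hd⟩ := T.exists_isPath_d_eq_plen x y
  rw [hd, T.d_eq_plen hp.reverse, plen, plen, Walk.edges_reverse, List.map_reverse,
    List.sum_reverse]

theorem eq_of_d_eq_zero (h : T.d x y = 0) : x = y := by
  obtain ⟨p, _, hd⟩ := T.exists_isPath_d_eq_plen x y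
  cases p with
  | nil => rfl
  | cons hadj q =>
    have hlen := T.len_pos _ (T.G.mem_edgeSet.mpr hadj)
    have hq := T.plen_nonneg q
    simp only [plen, Walk.edges_cons, List.map_cons, List.sum_cons] at hd hq
    linarith

variable [DecidableEq V]

theorem plen_bypass_le (p : T.G.Walk x y) : T.plen p.bypass ≤ T.plen p :=
  (p.edges_bypass_sublist_edges.map T.len).sum_le_sum fun _ hl => by
    obtain ⟨e, he, rfl⟩ := List.mem_map.1 hl
    exact (T.len_pos e (p.edges_subset_edgeSet he)).le

theorem d_le_plen (p : T.G.Walk x y) : T.d x y ≤ T.plen p :=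
  (T.d_eq_plen p.bypass_isPath).trans_le (T.plen_bypass_le p)

theorem d_triangle (x y z : V) : T.d x z ≤ T.d x y + T.d y z := by
  obtain ⟨p, -, hpd⟩ := T.exists_isPath_d_eq_plen x y
  obtain ⟨q, -, hqd⟩ := T.exists_isPath_d_eq_plen y z
  rw [hpd, hqd, ← plen_append]
  exact T.d_le_plen _

theorem d_eq_add_of_mem_support {p : T.G.Walk x y} (hp : p.IsPath) (hz : z ∈ p.support) :
    T.d x y = T.d x z + T.d z y := by
  rw [T.d_eq_plen hp, T.d_eq_plen (hp.takeUntil hz), T.d_eq_plen (hp.dropUntil hz),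
    ← plen_append, p.take_spec hz]

theorem closest_mem_and_le {l : List V} (hl : l ≠ []) (v : V) :
    T.closest l v ∈ l ∧ ∀ u ∈ l, T.d (T.closest l v) v ≤ T.d u v := by
  have h : ∃ u ∈ l, ∀ u' ∈ l, T.d u v ≤ T.d u' v := by
    obtain ⟨u, hu, hmin⟩ :=
      l.toFinset.exists_min_image (T.d · v) ((List.toFinset_nonempty_iff l).2 hl)
    exact ⟨u, List.mem_toFinset.1 hu, fun u' hu' => hmin u' (List.mem_toFinset.2 hu')⟩
  rw [closest, dif_pos h]
  exact h.choose_spec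

theorem d_eq_d_closest_add (P : T.G.Walk a b) (v : V) {u : V} (hu : u ∈ P.support) :
    T.d u v = T.d u (T.closest P.support v) + T.d (T.closest P.support v) v := by
  obtain ⟨hc, hmin⟩ := T.closest_mem_and_le P.support_ne_nil v
  set c := T.closest P.support v
  obtain ⟨R, hR, hRd⟩ := T.exists_isPath_d_eq_plen c v
  obtain ⟨S, hS, hSP⟩ := P.exists_isPath_support_subset hu hc
  -- `R` leaves the path at once: a later vertex of `R` on `P` would be closer to `v` than `c`.
  have hRP : ∀ x ∈ S.support, x ∈ R.support → x = c := fun x hxS hxR => by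
    have hsplit := T.d_eq_add_of_mem_support hR hxR
    have := hmin x (hSP hxS)
    exact (T.eq_of_d_eq_zero (le_antisymm (by linarith [T.d_nonneg x v]) (T.d_nonneg c x))).symm
  rw [T.d_eq_plen (hS.append_of_support_inter hR hRP), plen_append, ← T.d_eq_plen hS, hRd]

theorem d_closest_closest_le (P : T.G.Walk a b) (x y : V) :
    T.d (T.closest P.support x) (T.closest P.support y) ≤ T.d x y := by
  have hx := T.d_eq_d_closest_add P y (T.closest_mem_and_le P.support_ne_nil x).1
  have hy := T.d_eq_d_closest_add P x (T.closest_mem_and_le P.support_ne_nil y).1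
  linarith [T.d_triangle (T.closest P.support y) y x, T.d_triangle (T.closest P.support x) x y,
    T.d_symm (T.closest P.support y) (T.closest P.support x), T.d_symm y x]

theorem closest_closest_of_subset (P : T.G.Walk a b) (P' : T.G.Walk a' b')
    (hsub : P.support ⊆ P'.support) (v : V) :
    T.closest P.support (T.closest P'.support v) = T.closest P.support v := by
  set y := T.closest P'.support v
  obtain ⟨hcv, hcv_min⟩ := T.closest_mem_and_le P.support_ne_nil v
  obtain ⟨hcy, hcy_min⟩ := T.closest_mem_and_le P.support_ne_nil y
  have hv := T.d_eq_d_closest_add P' v (hsub hcv)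
  have hy := T.d_eq_d_closest_add P' v (hsub hcy)
  have hgate := T.d_eq_d_closest_add P y hcv
  have := hcv_min _ hcy
  have := hcy_min _ hcv
  exact (T.eq_of_d_eq_zero (by linarith [T.d_nonneg (T.closest P.support v) y])).symm

theorem d_closest_le_of_subset (P : T.G.Walk a b) (P' : T.G.Walk a' b')
    (hsub : P.support ⊆ P'.support) (u v : V) :
    T.d (T.closest P.support u) (T.closest P.support v)
      ≤ T.d (T.closest P'.support u) (T.closest P'.support v) := by
  rw [← T.closest_closest_of_subset P P' hsub u, ← T.closest_closest_of_subset P P' hsub v]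
  exact T.d_closest_closest_le P _ _

theorem dbar_eq_sum {l : List V} (hl : l ≠ []) (hnd : l.Nodup) (p : V) :
    T.dbar l p = ∑ v, T.w v * T.d (T.closest l v) p := by
  rw [dbar, ← List.sum_toFinset _ hnd, ← Finset.sum_fiberwise_of_maps_to (s := Finset.univ)
    (fun v _ => List.mem_toFinset.2 (T.closest_mem_and_le hl v).1)]
  refine Finset.sum_congr rfl fun q _ => ?_
  rw [wBranch, Finset.sum_mul]
  exact Finset.sum_congr rfl fun v hv => by rw [(Finset.mem_filter.1 hv).2]

theorem s_nonneg (l : List V) (v : V) : 0 ≤ T.s l v := by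
  refine mul_nonneg (one_div_nonneg.2 T.vt_pos.le) (List.sum_nonneg fun _ hx => ?_)
  obtain ⟨q, _, rfl⟩ := List.mem_map.1 hx
  exact mul_nonneg (Finset.sum_nonneg fun v _ => T.w_nonneg v) (T.d_nonneg _ _)

theorem s_mono {P : T.G.Walk a b} {P' : T.G.Walk a' b'} (hP : P.IsPath) (hP' : P'.IsPath)
    (hsub : P.support ⊆ P'.support) (v : V) : T.s P.support v ≤ T.s P'.support v := by
  simp only [s, sOn, T.dbar_eq_sum P.support_ne_nil hP.support_nodup,
    T.dbar_eq_sum P'.support_ne_nil hP'.support_nodup]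
  gcongr with u
  · exact one_div_nonneg.2 T.vt_pos.le
  · exact T.w_nonneg u
  · exact T.d_closest_le_of_subset P P' hsub u v

theorem Sbar_mono {P : T.G.Walk a b} {P' : T.G.Walk a' b'} (hP : P.IsPath) (hP' : P'.IsPath)
    (hsub : P.support ⊆ P'.support) : T.Sbar P.support ≤ T.Sbar P'.support :=
  Finset.sum_le_sum fun v _ =>
    mul_le_mul_of_nonneg_left (T.s_mono hP hP' hsub v) (T.w_nonneg v)

theorem S2bar_mono {P : T.G.Walk a b} {P' : T.G.Walk a' b'} (hP : P.IsPath) (hP' : P'.IsPath)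
    (hsub : P.support ⊆ P'.support) : T.S2bar P.support ≤ T.S2bar P'.support :=
  Finset.sum_le_sum fun v _ => mul_le_mul_of_nonneg_left
    (pow_le_pow_left₀ (T.s_nonneg _ v) (T.s_mono hP hP' hsub v) 2) (T.w_nonneg v)

theorem S2bar_nonneg (l : List V) : 0 ≤ T.S2bar l :=
  Finset.sum_nonneg fun v _ => mul_nonneg (T.w_nonneg v) (sq_nonneg _)

theorem Qbar_le_Qbar {lam : ℝ} (hlam : 0 ≤ lam) {l l' : List V}
    (hS : T.Sbar l ≤ T.Sbar l') (hS2 : T.S2bar l ≤ T.S2bar l') :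
    T.Qbar lam l ≤ T.Qbar lam l' := by
  have hmono : lam * T.Sbar l ≤ lam * T.Sbar l' := mul_le_mul_of_nonneg_left hS hlam
  unfold Qbar
  split_ifs with h h'
  · exact ENNReal.ofReal_le_ofReal <| div_le_div₀
      (mul_nonneg hlam ((T.S2bar_nonneg l).trans hS2)) (mul_le_mul_of_nonneg_left hS2 hlam)
      (by linarith) (by linarith)
  · exact le_top
  · linarith
  · exact le_top

end WeightedTree

/-- if `P` is a subpath of `P'` then `Q̄(P) ≤ Q̄(P')`, where `Q̄` takes
values in `[0,∞]`. -/
theorem Qbar_monotone {V : Type*} [Fintype V] [DecidableEq V] (T : WeightedTree V)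
    {a b a' b' : V} (P : T.G.Walk a b) (hP : P.IsPath)
    (P' : T.G.Walk a' b') (hP' : P'.IsPath)
    (hsub : P.support <:+: P'.support)
    (lam : ℝ) (hlam : 0 < lam) :
    T.Qbar lam P.support ≤ T.Qbar lam P'.support :=
  T.Qbar_le_Qbar hlam.le (T.Sbar_mono hP hP' hsub.subset) (T.S2bar_mono hP hP' hsub.subset)
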